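/- Chatterjee's second lemma: under the exchangeable-pair setup, if there are finite constants A, B > 0 with P(V ≤ A·f(X) + B) = 1, then E[exp(λ f(X))] ≤ exp( B λ² / (2(1 − Aλ)) ) for every λ ∈ [0, 1/A), and consequently P(f(X) ≥ t) ≤ exp( −t² / (2B + 2At) ) for every t ≥ 0. -/

import Mathlib

/-!
Write `g = f ∘ X`, `g' = f ∘ X'` and `m l = E[exp (l g)]`, so that `m' l = E[g exp (l g)]`.
Conditioning on `X` turns `m' l` into `E[exp (l g) F(X, X')]`; exchangeability and antisymmetry
of `F` make this `½ E[(exp (l g) - exp (l g')) F(X, X')]`, and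
`|exp a - exp b| ≤ |a - b| (exp a + exp b) / 2` bounds it by `l E[exp (l g) V]`, hence by
`l (A m' l + B m l)`. Integrating this differential inequality for `log m` on `[0, l]` bounds the
moment generating function, and the tail bound is Chernoff's inequality at `l = t / (B + A t)`.
-/

open MeasureTheory ProbabilityTheory Real

lemma sinh_le_mul_cosh {x : ℝ} (hx : 0 ≤ x) : sinh x ≤ x * cosh x := by
  let φ : ℝ → ℝ := fun y => y * cosh y - sinh y
  have hφ : ∀ y, HasDerivAt φ (y * sinh y) y := fun y =>
    (((hasDerivAt_id y).mul (hasDerivAt_cosh y)).sub (hasDerivAt_sinh y)).congr_deriv (by simp)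
  have hmono : MonotoneOn φ (Set.Ici 0) :=
    monotoneOn_of_hasDerivWithinAt_nonneg (convex_Ici 0)
      (fun y _ => (hφ y).continuousAt.continuousWithinAt) (fun y _ => (hφ y).hasDerivWithinAt)
      fun y hy => by
        rw [interior_Ici] at hy
        exact mul_nonneg hy.le (sinh_nonneg_iff.2 hy.le)
  have := hmono Set.self_mem_Ici hx hx
  simp only [φ, zero_mul, sinh_zero, sub_zero] at this
  linarith

lemma abs_exp_sub_exp_le (a b : ℝ) : |exp a - exp b| ≤ |a - b| * (exp a + exp b) / 2 := by
  wlog hba : b ≤ a generalizing a b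
  · rw [abs_sub_comm, abs_sub_comm a, add_comm]
    exact this b a (le_of_not_ge hba)
  rw [abs_of_nonneg (sub_nonneg.2 (exp_le_exp.2 hba)), abs_of_nonneg (sub_nonneg.2 hba)]
  -- `exp a = exp c * exp u`, `exp b = exp c * exp (-u)` with `c = (a + b) / 2`, `u = (a - b) / 2`
  have key := mul_le_mul_of_nonneg_left (sinh_le_mul_cosh (x := (a - b) / 2) (by linarith))
    (exp_pos ((a + b) / 2)).le
  have ha : exp ((a + b) / 2) * exp ((a - b) / 2) = exp a := by rw [← exp_add]; ring_nf
  have hb : exp ((a + b) / 2) * exp (-((a - b) / 2)) = exp b := by rw [← exp_add]; ring_nf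
  rw [sinh_eq, cosh_eq] at key
  nlinarith

lemma exp_mul_sub_exp_mul_mul_le {l : ℝ} (hl : 0 ≤ l) (a b k : ℝ) :
    (exp (l * a) - exp (l * b)) * k ≤ l / 2 * |(a - b) * k| * (exp (l * a) + exp (l * b)) := by
  have h := abs_exp_sub_exp_le (l * a) (l * b)
  rw [← mul_sub, abs_mul, abs_of_nonneg hl] at h
  calc (exp (l * a) - exp (l * b)) * k ≤ |exp (l * a) - exp (l * b)| * |k| := by
        rw [← abs_mul]; exact le_abs_self _
    _ ≤ l * |a - b| * (exp (l * a) + exp (l * b)) / 2 * |k| := by gcongr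
    _ = l / 2 * |(a - b) * k| * (exp (l * a) + exp (l * b)) := by rw [abs_mul]; ring

lemma le_exp_of_hasDerivAt_le {m m' : ℝ → ℝ} {A B l : ℝ} (hA : 0 ≤ A) (hB : 0 ≤ B)
    (hl : 0 ≤ l) (hAl : A * l < 1) (hm0 : m 0 = 1) (hpos : ∀ x ∈ Set.Icc 0 l, 0 < m x)
    (hderiv : ∀ x ∈ Set.Icc 0 l, HasDerivAt m (m' x) x)
    (hle : ∀ x ∈ Set.Icc 0 l, m' x ≤ x * (A * m' x + B * m x)) :
    m l ≤ exp (B * l ^ 2 / (2 * (1 - A * l))) := by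
  have hAx : ∀ x ∈ Set.Icc 0 l, 0 < 1 - A * x := fun x hx => by
    nlinarith [mul_le_mul_of_nonneg_left hx.2 hA]
  let ψ : ℝ → ℝ := fun x => log (m x) - B * x ^ 2 / (2 * (1 - A * x))
  let ψ' : ℝ → ℝ := fun x => m' x / m x - B * (2 * x - A * x ^ 2) / (2 * (1 - A * x) ^ 2)
  have hψ : ∀ x ∈ Set.Icc 0 l, HasDerivAt ψ (ψ' x) x := fun x hx => by
    have hq : HasDerivAt (fun x => 2 * (1 - A * x)) (-(2 * A)) x := by
      simpa using (((hasDerivAt_id x).const_mul A).const_sub 1).const_mul 2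
    refine ((hderiv x hx).log (hpos x hx).ne').sub
      ((((hasDerivAt_pow 2 x).const_mul B).div hq (by linarith [hAx x hx])).congr_deriv ?_)
    field_simp
    ring
  have hψ'_nonpos : ∀ x ∈ Set.Icc 0 l, ψ' x ≤ 0 := fun x hx => by
    have h1 := hAx x hx
    -- `(log m)' ≤ B x / (1 - A x)`, which is at most the derivative of `B x² / (2 (1 - A x))`
    have h2 : m' x / m x ≤ x * B / (1 - A * x) := by
      rw [div_le_div_iff₀ (hpos x hx) h1]
      nlinarith [hle x hx]
    have h3 : x * B / (1 - A * x) ≤ B * (2 * x - A * x ^ 2) / (2 * (1 - A * x) ^ 2) := by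
      rw [div_le_div_iff₀ h1 (by positivity)]
      nlinarith [mul_nonneg (mul_nonneg (mul_nonneg hA hB) (sq_nonneg x)) h1.le]
    simp only [ψ']
    linarith
  have hanti : AntitoneOn ψ (Set.Icc 0 l) :=
    antitoneOn_of_hasDerivWithinAt_nonpos (convex_Icc 0 l)
      (fun x hx => (hψ x hx).continuousAt.continuousWithinAt)
      (fun x hx => (hψ x (interior_subset hx)).hasDerivWithinAt)
      fun x hx => hψ'_nonpos x (interior_subset hx)
  have := hanti (Set.left_mem_Icc.2 hl) (Set.right_mem_Icc.2 hl) hl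
  simp only [ψ, hm0, log_one] at this
  rw [← log_le_iff_le_exp (hpos l (Set.right_mem_Icc.2 hl))]
  linarith [show B * 0 ^ 2 / (2 * (1 - A * 0)) = 0 by simp]

lemma measureReal_ge_le_exp_of_mgf_le {Ω : Type*} [MeasurableSpace Ω] {P : Measure Ω}
    [IsFiniteMeasure P] {Y : Ω → ℝ} {A B t : ℝ} (hA : 0 < A) (hB : 0 < B) (ht : 0 ≤ t)
    (hint : ∀ l, Integrable (fun ω => exp (l * Y ω)) P)
    (hmgf : ∀ l, 0 ≤ l → l < 1 / A → mgf Y P l ≤ exp (B * l ^ 2 / (2 * (1 - A * l)))) :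
    P.real {ω | t ≤ Y ω} ≤ exp (-(t ^ 2) / (2 * B + 2 * A * t)) := by
  have hBAt : 0 < B + A * t := by positivity
  set l := t / (B + A * t)
  have hl : 0 ≤ l := by positivity
  have hlA : l < 1 / A := by
    rw [div_lt_div_iff₀ hBAt hA]
    nlinarith
  calc P.real {ω | t ≤ Y ω} ≤ exp (-l * t) * mgf Y P l :=
        measure_ge_le_exp_mul_mgf t hl (hint l)
    _ ≤ exp (-l * t) * exp (B * l ^ 2 / (2 * (1 - A * l))) := by gcongr; exact hmgf l hl hlA
    _ = exp (-(t ^ 2) / (2 * B + 2 * A * t)) := by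
      rw [← exp_add]
      congr 1
      have h1 : 1 - A * l = B / (B + A * t) := by simp only [l]; field_simp; ring
      rw [h1]
      simp only [l]
      field_simp
      ring

section CondExp

variable {Ω : Type*} {m mΩ : MeasurableSpace Ω} {μ : Measure Ω}

lemma integral_mul_condExp (hm : m ≤ mΩ) [SigmaFinite (μ.trim hm)] {e K : Ω → ℝ}
    (he : StronglyMeasurable[m] e) (heK : Integrable (fun ω => e ω * K ω) μ)
    (hK : Integrable K μ) :
    ∫ ω, e ω * K ω ∂μ = ∫ ω, e ω * μ[K|m] ω ∂μ := by
  rw [← integral_condExp hm]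
  exact integral_congr_ae (condExp_mul_of_stronglyMeasurable_left he heK hK)

lemma iSup_ofReal_min_natCast_mul {e c : ℝ} (hc : 0 ≤ c) :
    ⨆ n : ℕ, ENNReal.ofReal (min e n * c) = ENNReal.ofReal (e * c) :=
  le_antisymm (iSup_le fun n => ENNReal.ofReal_le_ofReal (by gcongr; exact min_le_left _ _))
    (le_iSup_of_le ⌈e⌉₊ (by rw [min_eq_left (Nat.le_ceil e)]))

lemma lintegral_ofReal_mul_condExp (hm : m ≤ mΩ) [SigmaFinite (μ.trim hm)] {e W : Ω → ℝ}
    (he : StronglyMeasurable[m] e) (he0 : 0 ≤ e) (hW : Integrable W μ) (hW0 : 0 ≤ᵐ[μ] W) :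
    ∫⁻ ω, ENNReal.ofReal (e ω * W ω) ∂μ
      = ∫⁻ ω, ENNReal.ofReal (e ω * μ[W|m] ω) ∂μ := by
  -- `e * W` need not be integrable: truncate `e` at level `n`, then use monotone convergence.
  have hcW : 0 ≤ᵐ[μ] μ[W|m] := condExp_nonneg hW0
  have htrunc : ∀ n : ℕ, ∫⁻ ω, ENNReal.ofReal (min (e ω) n * W ω) ∂μ
      = ∫⁻ ω, ENNReal.ofReal (min (e ω) n * μ[W|m] ω) ∂μ := fun n => by
    have hen : StronglyMeasurable[m] fun ω => min (e ω) (n : ℝ) := by fun_prop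
    have hbdd : ∀ᵐ ω ∂μ, ‖min (e ω) (n : ℝ)‖ ≤ n := .of_forall fun ω => by
      rw [norm_of_nonneg (le_min (he0 ω) n.cast_nonneg)]
      exact min_le_right _ _
    have h1 := hW.bdd_mul (hen.mono hm).aestronglyMeasurable hbdd
    have h2 : Integrable (fun ω => min (e ω) (n : ℝ) * μ[W|m] ω) μ :=
      integrable_condExp.bdd_mul (hen.mono hm).aestronglyMeasurable hbdd
    rw [← ofReal_integral_eq_lintegral_ofReal h1, ← ofReal_integral_eq_lintegral_ofReal h2,
      integral_mul_condExp hm hen h1 hW]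
    · filter_upwards [hcW] with ω hω using mul_nonneg (le_min (he0 ω) n.cast_nonneg) hω
    · filter_upwards [hW0] with ω hω using mul_nonneg (le_min (he0 ω) n.cast_nonneg) hω
  have hmono : ∀ {G : Ω → ℝ}, 0 ≤ᵐ[μ] G →
      ∀ᵐ ω ∂μ, Monotone fun n : ℕ => ENNReal.ofReal (min (e ω) n * G ω) := fun hG => by
    filter_upwards [hG] with ω hω n k hnk
    exact ENNReal.ofReal_le_ofReal (by gcongr)
  have hmeas : ∀ {G : Ω → ℝ}, AEMeasurable G μ →
      ∀ n : ℕ, AEMeasurable (fun ω => ENNReal.ofReal (min (e ω) n * G ω)) μ := fun hG n =>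
    (((he.mono hm).measurable.min measurable_const).aemeasurable.mul hG).ennreal_ofReal
  calc ∫⁻ ω, ENNReal.ofReal (e ω * W ω) ∂μ
      = ∫⁻ ω, ⨆ n : ℕ, ENNReal.ofReal (min (e ω) n * W ω) ∂μ := by
        refine lintegral_congr_ae ?_
        filter_upwards [hW0] with ω hω using (iSup_ofReal_min_natCast_mul hω).symm
    _ = ∫⁻ ω, ⨆ n : ℕ, ENNReal.ofReal (min (e ω) n * μ[W|m] ω) ∂μ := by
        rw [lintegral_iSup' (hmeas hW.aemeasurable) (hmono hW0),
          lintegral_iSup' (hmeas (integrable_condExp (m := m)).aemeasurable) (hmono hcW)]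
        simp_rw [htrunc]
    _ = ∫⁻ ω, ENNReal.ofReal (e ω * μ[W|m] ω) ∂μ := by
        refine lintegral_congr_ae ?_
        filter_upwards [hcW] with ω hω using iSup_ofReal_min_natCast_mul hω

lemma integrable_mul_of_integrable_mul_condExp (hm : m ≤ mΩ) [SigmaFinite (μ.trim hm)]
    {e W : Ω → ℝ} (he : StronglyMeasurable[m] e) (he0 : 0 ≤ e) (hW : Integrable W μ)
    (hW0 : 0 ≤ᵐ[μ] W) (heW : Integrable (fun ω => e ω * μ[W|m] ω) μ) :
    Integrable (fun ω => e ω * W ω) μ := by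
  refine ⟨(he.mono hm).aestronglyMeasurable.mul hW.aestronglyMeasurable, ?_⟩
  have h0 : 0 ≤ᵐ[μ] fun ω => e ω * μ[W|m] ω := by
    filter_upwards [condExp_nonneg (m := m) hW0] with ω hω using mul_nonneg (he0 ω) hω
  rw [hasFiniteIntegral_iff_ofReal
      (by filter_upwards [hW0] with ω hω using mul_nonneg (he0 ω) hω),
    lintegral_ofReal_mul_condExp hm he he0 hW hW0, ← hasFiniteIntegral_iff_ofReal h0]
  exact heW.2

lemma integral_mul_condExp_of_nonneg (hm : m ≤ mΩ) [SigmaFinite (μ.trim hm)]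
    {e W : Ω → ℝ} (he : StronglyMeasurable[m] e) (he0 : 0 ≤ e) (hW : Integrable W μ)
    (hW0 : 0 ≤ᵐ[μ] W) (heW : Integrable (fun ω => e ω * μ[W|m] ω) μ) :
    ∫ ω, e ω * W ω ∂μ = ∫ ω, e ω * μ[W|m] ω ∂μ := by
  have h0 : 0 ≤ᵐ[μ] fun ω => e ω * μ[W|m] ω := by
    filter_upwards [condExp_nonneg (m := m) hW0] with ω hω using mul_nonneg (he0 ω) hω
  rw [integral_eq_lintegral_of_nonneg_ae h0 heW.aestronglyMeasurable,
    integral_eq_lintegral_of_nonneg_ae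
      (by filter_upwards [hW0] with ω hω using mul_nonneg (he0 ω) hω)
      (integrable_mul_of_integrable_mul_condExp hm he he0 hW hW0 heW).aestronglyMeasurable,
    lintegral_ofReal_mul_condExp hm he he0 hW hW0]

lemma integrable_mul_condExp_of_le (hm : m ≤ mΩ) [SigmaFinite (μ.trim hm)]
    {e W h : Ω → ℝ} (he : StronglyMeasurable[m] e) (he0 : 0 ≤ e) (hW0 : 0 ≤ᵐ[μ] W)
    (hh : Integrable (fun ω => e ω * h ω) μ) (hWh : ∀ᵐ ω ∂μ, μ[W|m] ω ≤ h ω) :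
    Integrable (fun ω => e ω * μ[W|m] ω) μ := by
  refine hh.mono' ((he.mul stronglyMeasurable_condExp).mono hm).aestronglyMeasurable ?_
  filter_upwards [hWh, condExp_nonneg (m := m) hW0] with ω hωh hω0
  rw [norm_of_nonneg (mul_nonneg (he0 ω) hω0)]
  exact mul_le_mul_of_nonneg_left hωh (he0 ω)

end CondExp

lemma integrable_exp_mul_of_memLp_two {Ω : Type*} [MeasurableSpace Ω] {μ : Measure Ω}
    {Y K : Ω → ℝ} {l : ℝ} (hY : AEMeasurable Y μ)
    (hexp : Integrable (fun ω => exp (2 * l * Y ω)) μ) (hK : MemLp K 2 μ) :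
    Integrable (fun ω => exp (l * Y ω) * K ω) μ := by
  have he : MemLp (fun ω => exp (l * Y ω)) 2 μ := by
    refine (memLp_two_iff_integrable_sq (by fun_prop)).2 ?_
    simpa only [← exp_nat_mul, Nat.cast_ofNat, ← mul_assoc] using hexp
  exact he.integrable_mul hK

lemma mem_interior_integrableExpSet_of_forall {Ω : Type*} [MeasurableSpace Ω] {μ : Measure Ω}
    {Y : Ω → ℝ} (h : ∀ t, Integrable (fun ω => exp (t * Y ω)) μ) (t : ℝ) :
    t ∈ interior (integrableExpSet Y μ) := by
  simp [Set.eq_univ_of_forall (s := integrableExpSet Y μ) h]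

abbrev IsExchangeablePair {Ω 𝒳 : Type*} [MeasurableSpace Ω] [MeasurableSpace 𝒳]
    (X X' : Ω → 𝒳) (P : Measure Ω) : Prop :=
  IdentDistrib (fun ω => (X ω, X' ω)) (fun ω => (X' ω, X ω)) P P

section ExchangeablePair

variable {Ω 𝒳 : Type*} [MeasurableSpace Ω] [MeasurableSpace 𝒳] {P : Measure Ω}
  {X X' : Ω → 𝒳} {F : 𝒳 → 𝒳 → ℝ}

lemma integral_comp_swap (hexch : IsExchangeablePair X X' P)
    {H : 𝒳 × 𝒳 → ℝ} (hH : Measurable H) :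
    ∫ ω, H (X' ω, X ω) ∂P = ∫ ω, H (X ω, X' ω) ∂P :=
  (hexch.comp hH).integral_eq.symm

lemma integrable_comp_swap
    (hexch : IsExchangeablePair X X' P)
    {H : 𝒳 × 𝒳 → ℝ} (hH : Measurable H)
    (hint : Integrable (fun ω => H (X ω, X' ω)) P) :
    Integrable (fun ω => H (X' ω, X ω)) P :=
  (hexch.comp hH).integrable_iff.1 hint

lemma integrable_comp_snd_mul_of_antisymm
    (hexch : IsExchangeablePair X X' P)
    (hFmeas : Measurable fun p : 𝒳 × 𝒳 => F p.1 p.2) (hFanti : ∀ x y, F x y = -F y x)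
    {φ : 𝒳 → ℝ} (hφ : Measurable φ)
    (hint : Integrable (fun ω => φ (X ω) * F (X ω) (X' ω)) P) :
    Integrable (fun ω => φ (X' ω) * F (X ω) (X' ω)) P := by
  have hH : Measurable fun p : 𝒳 × 𝒳 => φ p.1 * F p.1 p.2 := by fun_prop
  refine (integrable_comp_swap hexch hH hint).neg.congr (.of_forall fun ω => ?_)
  simp only [Pi.neg_apply, hFanti (X ω) (X' ω)]
  ring

/-- Stein's identity for an exchangeable pair and an antisymmetric kernel. -/
lemma two_mul_integral_mul_eq_integral_sub_mul
    (hexch : IsExchangeablePair X X' P)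
    (hFmeas : Measurable fun p : 𝒳 × 𝒳 => F p.1 p.2) (hFanti : ∀ x y, F x y = -F y x)
    {φ : 𝒳 → ℝ} (hφ : Measurable φ)
    (hint : Integrable (fun ω => φ (X ω) * F (X ω) (X' ω)) P) :
    2 * ∫ ω, φ (X ω) * F (X ω) (X' ω) ∂P
      = ∫ ω, (φ (X ω) - φ (X' ω)) * F (X ω) (X' ω) ∂P := by
  have hswap := integral_comp_swap hexch (H := fun p => φ p.1 * F p.1 p.2) (by fun_prop)
  simp_rw [sub_mul]
  rw [integral_sub hint (integrable_comp_snd_mul_of_antisymm hexch hFmeas hFanti hφ hint),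
    ← hswap]
  simp_rw [hFanti (X' _) (X _), mul_neg, integral_neg]
  ring

lemma two_mul_integral_exp_mul_le
    (hexch : IsExchangeablePair X X' P)
    {f : 𝒳 → ℝ} (hf : Measurable f) (hFmeas : Measurable fun p : 𝒳 × 𝒳 => F p.1 p.2)
    (hFanti : ∀ x y, F x y = -F y x) {l : ℝ} (hl : 0 ≤ l)
    (heK : Integrable (fun ω => exp (l * f (X ω)) * F (X ω) (X' ω)) P)
    (heW : Integrable
      (fun ω => exp (l * f (X ω)) * |(f (X ω) - f (X' ω)) * F (X ω) (X' ω)|) P) :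
    2 * ∫ ω, exp (l * f (X ω)) * F (X ω) (X' ω) ∂P
      ≤ l * ∫ ω, exp (l * f (X ω)) * |(f (X ω) - f (X' ω)) * F (X ω) (X' ω)| ∂P := by
  let H : 𝒳 × 𝒳 → ℝ := fun p => exp (l * f p.1) * |(f p.1 - f p.2) * F p.1 p.2|
  have hH : Measurable H := by fun_prop
  have hHswap : ∀ x y, H (y, x) = exp (l * f y) * |(f x - f y) * F x y| := fun x y => by
    simp only [H, hFanti y x, show ∀ a b c : ℝ, (a - b) * -c = (b - a) * c by intros; ring]
  have hφ : Measurable fun x => exp (l * f x) := by fun_prop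
  have heW' : Integrable (fun ω => H (X ω, X' ω)) P := heW
  have hint := integrable_comp_swap hexch hH heW'
  rw [two_mul_integral_mul_eq_integral_sub_mul hexch hFmeas hFanti hφ heK]
  calc ∫ ω, (exp (l * f (X ω)) - exp (l * f (X' ω))) * F (X ω) (X' ω) ∂P
      ≤ ∫ ω, l / 2 * H (X ω, X' ω) + l / 2 * H (X' ω, X ω) ∂P := by
        refine integral_mono ?_ ((heW'.const_mul _).add (hint.const_mul _)) fun ω => ?_
        · simp_rw [sub_mul]
          exact heK.sub (integrable_comp_snd_mul_of_antisymm hexch hFmeas hFanti hφ heK)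
        · rw [hHswap (X ω) (X' ω)]
          simp only [H]
          linarith [exp_mul_sub_exp_mul_mul_le hl (f (X ω)) (f (X' ω)) (F (X ω) (X' ω))]
    _ = l * ∫ ω, H (X ω, X' ω) ∂P := by
        rw [integral_add (heW'.const_mul _) (hint.const_mul _), integral_const_mul,
          integral_const_mul, integral_comp_swap hexch hH]
        ring

lemma integral_mul_exp_le_of_condExp_le [IsFiniteMeasure P]
    (hexch : IsExchangeablePair X X' P)
    (hX : Measurable X) {f : 𝒳 → ℝ} (hf : Measurable f)
    (hmgf : ∀ t : ℝ, Integrable (fun ω => exp (t * f (X ω))) P)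
    (hFmeas : Measurable fun p : 𝒳 × 𝒳 => F p.1 p.2) (hFanti : ∀ x y, F x y = -F y x)
    (hFL2 : Integrable (fun ω => (F (X ω) (X' ω)) ^ 2) P)
    (hFcond : P[fun ω => F (X ω) (X' ω) | MeasurableSpace.comap X inferInstance]
      =ᵐ[P] fun ω => f (X ω))
    {l : ℝ} (hl : 0 ≤ l) {h : Ω → ℝ}
    (hh : Integrable (fun ω => exp (l * f (X ω)) * h ω) P)
    (hVh : ∀ᵐ ω ∂P, 1 / 2 * P[fun ω => |(f (X ω) - f (X' ω)) * F (X ω) (X' ω)|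
      | MeasurableSpace.comap X inferInstance] ω ≤ h ω) :
    ∫ ω, f (X ω) * exp (l * f (X ω)) ∂P ≤ l * ∫ ω, exp (l * f (X ω)) * h ω ∂P := by
  set K : Ω → ℝ := fun ω => F (X ω) (X' ω)
  set W : Ω → ℝ := fun ω => |(f (X ω) - f (X' ω)) * F (X ω) (X' ω)|
  have hmX : MeasurableSpace.comap X inferInstance ≤ ‹MeasurableSpace Ω› := hX.comap_le
  have he : StronglyMeasurable[MeasurableSpace.comap X inferInstance]
      fun ω => exp (l * f (X ω)) :=
    ((by fun_prop : Measurable fun x => exp (l * f x)).comp (comap_measurable X)).stronglyMeasurable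
  have he0 : 0 ≤ fun ω => exp (l * f (X ω)) := fun ω => (exp_pos _).le
  have hgL2 : MemLp (fun ω => f (X ω)) 2 P :=
    memLp_of_mem_interior_integrableExpSet (mem_interior_integrableExpSet_of_forall hmgf 0) 2
  have hg'L2 : MemLp (fun ω => f (X' ω)) 2 P :=
    ((hexch.comp measurable_fst).comp hf).memLp_iff.1 hgL2
  have hKL2 : MemLp K 2 P :=
    (memLp_two_iff_integrable_sq
      (hFmeas.comp_aemeasurable hexch.aemeasurable_fst).aestronglyMeasurable).2 hFL2
  have hK := hKL2.integrable one_le_two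
  have heK : Integrable (fun ω => exp (l * f (X ω)) * K ω) P :=
    integrable_exp_mul_of_memLp_two hgL2.aestronglyMeasurable.aemeasurable (hmgf (2 * l)) hKL2
  have hW : Integrable W P := ((hgL2.sub hg'L2).integrable_mul hKL2).abs
  have hW0 : 0 ≤ᵐ[P] W := .of_forall fun ω => abs_nonneg _
  have hh2 : Integrable (fun ω => exp (l * f (X ω)) * (2 * h ω)) P :=
    (hh.const_mul 2).congr (.of_forall fun ω => by ring)
  have hWh : ∀ᵐ ω ∂P, P[W|MeasurableSpace.comap X inferInstance] ω ≤ 2 * h ω := by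
    filter_upwards [hVh] with ω hω
    linarith
  have heWc := integrable_mul_condExp_of_le hmX he he0 hW0 hh2 hWh
  have heW := integrable_mul_of_integrable_mul_condExp hmX he he0 hW hW0 heWc
  calc ∫ ω, f (X ω) * exp (l * f (X ω)) ∂P
      = ∫ ω, exp (l * f (X ω)) * P[K|MeasurableSpace.comap X inferInstance] ω ∂P := by
        refine integral_congr_ae ?_
        filter_upwards [hFcond] with ω hω
        rw [hω, mul_comm]
    _ = ∫ ω, exp (l * f (X ω)) * K ω ∂P := (integral_mul_condExp hmX he heK hK).symm
    _ ≤ l / 2 * ∫ ω, exp (l * f (X ω)) * W ω ∂P := by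
        linarith [two_mul_integral_exp_mul_le hexch hf hFmeas hFanti hl heK heW]
    _ = l / 2 *
        ∫ ω, exp (l * f (X ω)) * P[W|MeasurableSpace.comap X inferInstance] ω ∂P := by
        rw [integral_mul_condExp_of_nonneg hmX he he0 hW hW0 heWc]
    _ ≤ l / 2 * ∫ ω, exp (l * f (X ω)) * (2 * h ω) ∂P := by
        refine mul_le_mul_of_nonneg_left (integral_mono_ae heWc hh2 ?_) (by positivity)
        filter_upwards [hWh] with ω hω using mul_le_mul_of_nonneg_left hω (he0 ω)
    _ = l * ∫ ω, exp (l * f (X ω)) * h ω ∂P := by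
        simp_rw [mul_left_comm _ (2 : ℝ)]
        rw [integral_const_mul]
        ring

end ExchangeablePair

theorem chatterjee_second_lemma_general
    {Ω 𝒳 : Type*} [MeasurableSpace Ω] [MeasurableSpace 𝒳]
    (P : Measure Ω) [IsProbabilityMeasure P]
    (X X' : Ω → 𝒳) (hX : Measurable X) (hX' : Measurable X')
    (hexch : P.map (fun ω => (X ω, X' ω)) = P.map (fun ω => (X' ω, X ω)))
    (f : 𝒳 → ℝ) (hf : Measurable f)
    (hmgf : ∀ t : ℝ, Integrable (fun ω => Real.exp (t * f (X ω))) P)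
    (F : 𝒳 → 𝒳 → ℝ) (hFmeas : Measurable fun p : 𝒳 × 𝒳 => F p.1 p.2)
    (hFanti : ∀ x y, F x y = -F y x)
    (hFL2 : Integrable (fun ω => (F (X ω) (X' ω)) ^ 2) P)
    (hFcond : MeasureTheory.condExp (MeasurableSpace.comap X inferInstance) P
        (fun ω => F (X ω) (X' ω)) =ᵐ[P] fun ω => f (X ω))
    (V : Ω → ℝ)
    (hV : V = fun ω => (1 / 2 : ℝ) *
      (MeasureTheory.condExp (MeasurableSpace.comap X inferInstance) P
        (fun ω' => |(f (X ω') - f (X' ω')) * F (X ω') (X' ω')|) ω))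
    (A B : ℝ) (hA : 0 < A) (hB : 0 < B)
    (hVbd : ∀ᵐ ω ∂P, V ω ≤ A * f (X ω) + B) :
    (∀ l : ℝ, 0 ≤ l → l < 1 / A →
      ∫ ω, Real.exp (l * f (X ω)) ∂P ≤ Real.exp (B * l ^ 2 / (2 * (1 - A * l)))) ∧
    (∀ t : ℝ, 0 ≤ t →
      (P {ω | t ≤ f (X ω)}).toReal ≤ Real.exp (-(t ^ 2) / (2 * B + 2 * A * t))) := by
  have hexch' : IsExchangeablePair X X' P :=
    ⟨(hX.prodMk hX').aemeasurable, (hX'.prodMk hX).aemeasurable, hexch⟩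
  have hinterior := mem_interior_integrableExpSet_of_forall hmgf
  subst hV
  have hderiv_le : ∀ l, 0 ≤ l → ∫ ω, f (X ω) * exp (l * f (X ω)) ∂P
      ≤ l * (A * ∫ ω, f (X ω) * exp (l * f (X ω)) ∂P
        + B * mgf (fun ω => f (X ω)) P l) := by
    intro l hl
    have hge : Integrable (fun ω => f (X ω) * exp (l * f (X ω))) P := by
      simpa using integrable_pow_mul_exp_of_mem_interior_integrableExpSet (hinterior l) 1
    have hsplit : (fun ω => exp (l * f (X ω)) * (A * f (X ω) + B))
        = fun ω => A * (f (X ω) * exp (l * f (X ω))) + B * exp (l * f (X ω)) := by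
      ext ω
      ring
    have hbound := integral_mul_exp_le_of_condExp_le hexch' hX hf hmgf hFmeas hFanti hFL2 hFcond
      hl (h := fun ω => A * f (X ω) + B)
      (by rw [hsplit]; exact (hge.const_mul A).add ((hmgf l).const_mul B)) hVbd
    rwa [hsplit, integral_add (hge.const_mul A) ((hmgf l).const_mul B), integral_const_mul,
      integral_const_mul] at hbound
  have hmgf_le : ∀ l, 0 ≤ l → l < 1 / A →
      mgf (fun ω => f (X ω)) P l ≤ exp (B * l ^ 2 / (2 * (1 - A * l))) := fun l hl hlA =>
    le_exp_of_hasDerivAt_le hA.le hB.le hl (by rwa [lt_div_iff₀ hA, mul_comm] at hlA) mgf_zero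
      (fun x _ => mgf_pos (hmgf x)) (fun x _ => hasDerivAt_mgf (hinterior x))
      fun x hx => hderiv_le x hx.1
  exact ⟨hmgf_le, fun t ht => measureReal_ge_le_exp_of_mgf_le hA hB ht hmgf hmgf_le⟩

theorem chatterjee_second_lemma
    {Ω 𝒳 : Type*} [MeasurableSpace Ω] [MeasurableSpace 𝒳]
    (P : Measure Ω) [IsProbabilityMeasure P]
    (X X' : Ω → 𝒳) (hX : Measurable X) (hX' : Measurable X')
    (hexch : P.map (fun ω => (X ω, X' ω)) = P.map (fun ω => (X' ω, X ω)))
    (f : 𝒳 → ℝ) (hf : Measurable f)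
    (hmean : ∫ ω, f (X ω) ∂P = 0)
    (hL2 : Integrable (fun ω => (f (X ω)) ^ 2) P)
    (hmgf : ∀ t : ℝ, Integrable (fun ω => Real.exp (t * f (X ω))) P)
    (F : 𝒳 → 𝒳 → ℝ) (hFmeas : Measurable fun p : 𝒳 × 𝒳 => F p.1 p.2)
    (hFanti : ∀ x y, F x y = -F y x)
    (hFL2 : Integrable (fun ω => (F (X ω) (X' ω)) ^ 2) P)
    (hFcond : MeasureTheory.condExp (MeasurableSpace.comap X inferInstance) P
        (fun ω => F (X ω) (X' ω)) =ᵐ[P] fun ω => f (X ω))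
    (V : Ω → ℝ)
    (hV : V = fun ω => (1 / 2 : ℝ) *
      (MeasureTheory.condExp (MeasurableSpace.comap X inferInstance) P
        (fun ω' => |(f (X ω') - f (X' ω')) * F (X ω') (X' ω')|) ω))
    (A B : ℝ) (hA : 0 < A) (hB : 0 < B)
    (hVbd : ∀ᵐ ω ∂P, V ω ≤ A * f (X ω) + B) :
    (∀ l : ℝ, 0 ≤ l → l < 1 / A →
      ∫ ω, Real.exp (l * f (X ω)) ∂P ≤ Real.exp (B * l ^ 2 / (2 * (1 - A * l)))) ∧
    (∀ t : ℝ, 0 ≤ t →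
      (P {ω | t ≤ f (X ω)}).toReal ≤ Real.exp (-(t ^ 2) / (2 * B + 2 * A * t))) :=
  chatterjee_second_lemma_general P X X' hX hX' hexch f hf hmgf F hFmeas hFanti hFL2 hFcond V hV A B
    hA hB hVbd
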